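/- arXiv:2406.14876 — 2 statements merged into one kernel-verified Lean document; each statement's English description precedes it below -/
import Mathlib

section
/- Let X be a finite type, a : Finset X → ℝ a non-negative monotone set function, n ≥ 1, α ∈ (0,1], and let x₀, …, x_{n−1} be an α-approximate greedy sequence for a with partial sets B_i and output B_n. Let γ ∈ (0,1] be a lower bound on the submodularity ratio γ_{B_n, n}(a), and let B* ⊆ X with |B*| = n. Then for every i < n, a(B*) − a(B_{i+1}) ≤ (1 − α·γ/n)·(a(B*) − a(B_i)). -/
open Finset

/-!
Monotonicity gives `a(B*) ≤ a(B_i ∪ S)` for `S = B* \ B_i`, so the submodularity ratio bounds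
`γ·(a(B*) − a(B_i))` by `∑_{x ∈ S} Δ_a(x ∣ B_i)`; by the greedy choice each summand is at most
`Δ_a(x_i ∣ B_i) / α`, and `|S| ≤ n`. Since `Δ_a(x_i ∣ B_i) = a(B_{i+1}) − a(B_i)`, this is the
claimed contraction of the gap.
-/

/-- Marginal gain `Δ_a(x ∣ B) = a(B ∪ {x}) − a(B)`. -/
def margGain {X : Type*} [DecidableEq X] (a : Finset X → ℝ) (x : X) (B : Finset X) : ℝ :=
  a (insert x B) - a B

/-- The partial set `B_i = {x₀, …, x_{i−1}}` of a sequence `xs`. -/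
def partialSet {X : Type*} [DecidableEq X] {n : ℕ} (xs : Fin n → X) (i : ℕ) : Finset X :=
  (Finset.univ.filter (fun j : Fin n => (j : ℕ) < i)).image xs

section

variable {X : Type*} [DecidableEq X]

lemma monotone_of_margGain_nonneg {a : Finset X → ℝ} (ha : ∀ B x, 0 ≤ margGain a x B) :
    Monotone a := by
  have union_ge (B D : Finset X) : a B ≤ a (B ∪ D) := by
    induction D using Finset.induction_on with
    | empty => simp
    | insert x D _ ih =>
      have := ha (B ∪ D) x
      rw [margGain] at this
      rw [union_insert]
      linarith
  intro B C hBC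
  simpa [union_sdiff_of_subset hBC] using union_ge B (C \ B)

lemma partialSet_succ {n : ℕ} (xs : Fin n → X) (i : Fin n) :
    partialSet xs (i + 1) = insert (xs i) (partialSet xs i) := by
  rw [partialSet, partialSet, ← image_insert]
  congr 1
  ext j
  simp only [mem_insert, mem_filter, mem_univ, true_and, Fin.ext_iff]
  omega

lemma partialSet_mono {n : ℕ} (xs : Fin n → X) : Monotone (partialSet xs) :=
  fun _ _ hij => image_subset_image (monotone_filter_right _ fun _ _ h => h.trans_le hij)

variable {a : Finset X → ℝ} {α : ℝ} {B S : Finset X} {y : X}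

lemma mul_sum_margGain_le_card_mul
    (hgreedy : ∀ x ∉ B, α * margGain a x B ≤ margGain a y B) (hS : Disjoint S B) :
    α * ∑ x ∈ S, margGain a x B ≤ #S * margGain a y B := by
  rw [mul_sum, ← nsmul_eq_mul]
  exact sum_le_card_nsmul _ _ _ fun x hx => hgreedy x (disjoint_left.mp hS hx)

lemma mul_gap_le_card_mul_margGain (ha : ∀ B x, 0 ≤ margGain a x B) {γ : ℝ}
    (hα : 0 ≤ α) (hγ : 0 ≤ γ) (hgreedy : ∀ x ∉ B, α * margGain a x B ≤ margGain a y B)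
    {Bstar : Finset X}
    (hratio : γ * (a (B ∪ (Bstar \ B)) - a B) ≤ ∑ x ∈ Bstar \ B, margGain a x B) :
    α * γ * (a Bstar - a B) ≤ #(Bstar \ B) * margGain a y B := by
  have hcover : a Bstar ≤ a (B ∪ (Bstar \ B)) :=
    monotone_of_margGain_nonneg ha (by simp [union_sdiff_self_eq_union])
  calc α * γ * (a Bstar - a B)
      ≤ α * (γ * (a (B ∪ (Bstar \ B)) - a B)) := by
        rw [mul_assoc]; gcongr
    _ ≤ α * ∑ x ∈ Bstar \ B, margGain a x B := by gcongr
    _ ≤ #(Bstar \ B) * margGain a y B :=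
        mul_sum_margGain_le_card_mul hgreedy sdiff_disjoint

end

theorem approx_greedy_gap_decrease_general {X : Type*} [DecidableEq X]
    (a : Finset X → ℝ)
    (ha_mono : ∀ (B : Finset X) (x : X), 0 ≤ margGain a x B)
    (n : ℕ)
    (α : ℝ) (hα0 : 0 < α)
    (xs : Fin n → X)
    (hgreedy : ∀ i : Fin n, ∀ x : X, x ∉ partialSet xs i →
      α * margGain a x (partialSet xs i) ≤ margGain a (xs i) (partialSet xs i))
    (γ : ℝ) (hγ0 : 0 < γ)
    (hγ : ∀ S : Finset X, S.card ≤ n → ∀ B' ⊆ partialSet xs n \ S,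
      γ * (a (B' ∪ S) - a B') ≤ ∑ x ∈ S, margGain a x B')
    (Bstar : Finset X) (hBstar : Bstar.card = n) :
    ∀ i : Fin n,
      a Bstar - a (partialSet xs ((i : ℕ) + 1)) ≤
        (1 - α * γ / (n : ℝ)) * (a Bstar - a (partialSet xs i)) := by
  intro i
  set B := partialSet xs i
  have hcard : #(Bstar \ B) ≤ n := hBstar ▸ card_le_card sdiff_subset
  have hB : B ⊆ partialSet xs n \ (Bstar \ B) := fun x hx =>
    mem_sdiff.mpr ⟨partialSet_mono xs i.is_lt.le hx, fun h => (mem_sdiff.mp h).2 hx⟩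
  have hgap := mul_gap_le_card_mul_margGain ha_mono hα0.le hγ0.le (hgreedy i)
    (hγ _ hcard B hB)
  have hstep : a (partialSet xs (i + 1)) = a B + margGain a (xs i) B := by
    rw [partialSet_succ, margGain]; ring
  have hn : (0 : ℝ) < n := by exact_mod_cast i.pos
  have hdecrease : α * γ / n * (a Bstar - a B) ≤ margGain a (xs i) B := by
    rw [div_mul_eq_mul_div, div_le_iff₀ hn]
    nlinarith [ha_mono B (xs i), (Nat.cast_le (α := ℝ)).mpr hcard]
  rw [hstep]
  linarith

/-- per-step geometric decrease of the optimality gap of the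
α-approximate greedy algorithm:
`a(B*) − a(B_{i+1}) ≤ (1 − α·γ/n)·(a(B*) − a(B_i))`. -/
theorem approx_greedy_gap_decrease {X : Type*} [Fintype X] [DecidableEq X]
    (a : Finset X → ℝ)
    (ha_nonneg : ∀ B : Finset X, 0 ≤ a B)
    (ha_mono : ∀ (B : Finset X) (x : X), 0 ≤ margGain a x B)
    (n : ℕ) (hn : 1 ≤ n)
    (α : ℝ) (hα0 : 0 < α) (hα1 : α ≤ 1)
    (xs : Fin n → X)
    (hgreedy : ∀ i : Fin n, ∀ x : X, x ∉ partialSet xs i →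
      α * margGain a x (partialSet xs i) ≤ margGain a (xs i) (partialSet xs i))
    (γ : ℝ) (hγ0 : 0 < γ) (hγ1 : γ ≤ 1)
    (hγ : ∀ S : Finset X, S.card ≤ n → ∀ B' ⊆ partialSet xs n \ S,
      γ * (a (B' ∪ S) - a B') ≤ ∑ x ∈ S, margGain a x B')
    (Bstar : Finset X) (hBstar : Bstar.card = n) :
    ∀ i : Fin n,
      a Bstar - a (partialSet xs ((i : ℕ) + 1)) ≤
        (1 - α * γ / (n : ℝ)) * (a Bstar - a (partialSet xs i)) :=
  approx_greedy_gap_decrease_general a ha_mono n α hα0 xs hgreedy γ hγ0 hγ Bstar hBstar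
end

section
/- Let X be a metric space with distance d, let P, A ⊆ X be finite sets with |P| = n and |A| = i, where i ≤ n, and set U := P ∩ A, V := A \ U, W := P \ U. If |W| > 1, then d(U,W) + d(V,W) − (i·|W|·(n−|W|) / (n·(n−1)·(|W|−1)))·div(W) ≥ (i·|W| / (n·(n−1)))·div(P), where d(A,B) := Σ_{x∈A} Σ_{x'∈B} d(x,x') and div(B) := (1/2)·d(B,B). -/
open Finset

/-- `d(A,B) = Σ_{x∈A} Σ_{x'∈B} d(x,x')`. -/
noncomputable def setDist {X : Type*} [MetricSpace X] (A B : Finset X) : ℝ :=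
  ∑ x ∈ A, ∑ x' ∈ B, dist x x'

/-- Sum-dispersion `div(B) = (1/2)·d(B,B)`. -/
noncomputable def sumDisp {X : Type*} [MetricSpace X] (B : Finset X) : ℝ :=
  (1 / 2) * setDist B B

lemma setDist_nonneg' {X : Type*} [MetricSpace X] (A B : Finset X) : 0 ≤ setDist A B :=
  Finset.sum_nonneg fun _ _ => Finset.sum_nonneg fun _ _ => dist_nonneg

lemma setDist_comm' {X : Type*} [MetricSpace X] (A B : Finset X) :
    setDist A B = setDist B A := by
  unfold setDist
  rw [Finset.sum_comm]
  simp [dist_comm]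

lemma setDist_key {X : Type*} [MetricSpace X] [DecidableEq X] (S T : Finset X) :
    (S.card : ℝ) * setDist T T ≤ 2 * ((T.card : ℝ) - 1) * setDist S T := by
  have hx : ∀ x ∈ S, setDist T T ≤ 2 * ((T.card : ℝ) - 1) * ∑ y ∈ T, dist x y := by
    intro x _
    have hdiag : setDist T T = ∑ y ∈ T, ∑ y' ∈ T.erase y, dist y y' := by
      unfold setDist
      refine Finset.sum_congr rfl fun y hy => ?_
      exact (Finset.sum_erase _ (by simp)).symm
    rw [hdiag]
    calc ∑ y ∈ T, ∑ y' ∈ T.erase y, dist y y'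
        ≤ ∑ y ∈ T, ∑ y' ∈ T.erase y, (dist x y + dist x y') := by
          refine Finset.sum_le_sum fun y hy => Finset.sum_le_sum fun y' _ => ?_
          calc dist y y' ≤ dist y x + dist x y' := dist_triangle _ _ _
          _ = dist x y + dist x y' := by rw [dist_comm y x]
      _ = ∑ y ∈ T, (((T.card : ℝ) - 1) * dist x y + (∑ y' ∈ T, dist x y' - dist x y)) := by
          refine Finset.sum_congr rfl fun y hy => ?_
          rw [Finset.sum_add_distrib, Finset.sum_const, Finset.card_erase_of_mem hy,
            Finset.sum_erase_eq_sub hy, nsmul_eq_mul]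
          have h1 : 1 ≤ T.card := Finset.card_pos.2 ⟨y, hy⟩
          have : ((T.card - 1 : ℕ) : ℝ) = (T.card : ℝ) - 1 := by
            push_cast [h1]; ring
          rw [this]
      _ = 2 * ((T.card : ℝ) - 1) * ∑ y ∈ T, dist x y := by
          rw [Finset.sum_add_distrib, ← Finset.mul_sum, Finset.sum_sub_distrib,
            Finset.sum_const, nsmul_eq_mul]
          ring
  calc (S.card : ℝ) * setDist T T = ∑ _x ∈ S, setDist T T := by
        rw [Finset.sum_const, nsmul_eq_mul]
    _ ≤ ∑ x ∈ S, 2 * ((T.card : ℝ) - 1) * ∑ y ∈ T, dist x y := Finset.sum_le_sum hx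
    _ = 2 * ((T.card : ℝ) - 1) * setDist S T := by
        rw [← Finset.mul_sum]; rfl

lemma setDist_union' {X : Type*} [MetricSpace X] [DecidableEq X] {U W : Finset X}
    (hd : Disjoint U W) :
    setDist (U ∪ W) (U ∪ W) = setDist U U + 2 * setDist U W + setDist W W := by
  have hWU : setDist W U = setDist U W := setDist_comm' _ _
  unfold setDist at *
  rw [Finset.sum_union hd]
  simp only [Finset.sum_union hd, Finset.sum_add_distrib]
  linarith

set_option maxHeartbeats 1000000 in
/-- with `|P| = n`, `|A| = i ≤ n`, `U = P ∩ A`, `V = A \ U`,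
`W = P \ U`, and `|W| > 1`,
`d(U,W) + d(V,W) − (i·|W|·(n−|W|)/(n·(n−1)·(|W|−1)))·div(W) ≥ (i·|W|/(n·(n−1)))·div(P)`. -/
theorem dispersion_combined_inequality {X : Type*} [MetricSpace X] [DecidableEq X]
    (P A : Finset X) (n i : ℕ)
    (hP : P.card = n) (hA : A.card = i) (hin : i ≤ n)
    (hW : 1 < (P \ (P ∩ A)).card) :
    ((i : ℝ) * (((P \ (P ∩ A)).card : ℝ)) / ((n : ℝ) * ((n : ℝ) - 1))) * sumDisp P ≤
      setDist (P ∩ A) (P \ (P ∩ A)) + setDist (A \ (P ∩ A)) (P \ (P ∩ A)) -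
        ((i : ℝ) * ((P \ (P ∩ A)).card : ℝ) * ((n : ℝ) - ((P \ (P ∩ A)).card : ℝ)) /
            ((n : ℝ) * ((n : ℝ) - 1) * (((P \ (P ∩ A)).card : ℝ) - 1))) *
          sumDisp (P \ (P ∩ A)) := by
  subst hP hA
  set U := P ∩ A with hU
  set W := P \ U with hWdef
  set V := A \ U with hV
  have hUP : U ⊆ P := Finset.inter_subset_left
  have hUA : U ⊆ A := Finset.inter_subset_right
  have hdisj : Disjoint U W := Finset.disjoint_sdiff
  have hPU : U ∪ W = P := Finset.union_sdiff_of_subset hUP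
  have hcardW : W.card = P.card - U.card := Finset.card_sdiff_of_subset hUP
  have hcardP : U.card + W.card = P.card := by
    have := Finset.card_le_card hUP; omega
  have hcardV : V.card = A.card - U.card := Finset.card_sdiff_of_subset hUA
  have hcardA : U.card + V.card = A.card := by
    have := Finset.card_le_card hUA; omega
  have hvw : V.card ≤ W.card := by
    have := Finset.card_le_card hUA; omega
  -- real casts
  have hnr : ((P.card : ℝ)) = (U.card : ℝ) + (W.card : ℝ) := by exact_mod_cast hcardP.symm
  have hir : ((A.card : ℝ)) = (U.card : ℝ) + (V.card : ℝ) := by exact_mod_cast hcardA.symm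
  have hsP : setDist P P = setDist U U + 2 * setDist U W + setDist W W := by
    rw [← hPU]; exact setDist_union' hdisj
  have h1 : (W.card : ℝ) * setDist U U ≤ 2 * ((U.card : ℝ) - 1) * setDist U W := by
    have := setDist_key W U
    rwa [setDist_comm' W U] at this
  have h2 : (U.card : ℝ) * setDist W W ≤ 2 * ((W.card : ℝ) - 1) * setDist U W :=
    setDist_key U W
  have h3 : (V.card : ℝ) * setDist W W ≤ 2 * ((W.card : ℝ) - 1) * setDist V W :=
    setDist_key V W
  have ha : 0 ≤ setDist U W := setDist_nonneg' _ _
  have hb : 0 ≤ setDist V W := setDist_nonneg' _ _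
  have hs1 : 0 ≤ setDist U U := setDist_nonneg' _ _
  have hs2 : 0 ≤ setDist W W := setDist_nonneg' _ _
  have hw2 : (2 : ℝ) ≤ (W.card : ℝ) := by exact_mod_cast hW
  have hvwr : (V.card : ℝ) ≤ (W.card : ℝ) := by exact_mod_cast hvw
  have hcu : (0 : ℝ) ≤ (U.card : ℝ) := Nat.cast_nonneg _
  have hcv : (0 : ℝ) ≤ (V.card : ℝ) := Nat.cast_nonneg _
  unfold sumDisp
  rw [hsP, hnr, hir, ← sub_nonneg]
  set cu := (U.card : ℝ)
  set cv := (V.card : ℝ)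
  set cw := (W.card : ℝ)
  set a := setDist U W
  set b := setDist V W
  set s1 := setDist U U
  set s2 := setDist W W
  have hden1 : (0:ℝ) < cu + cw := by linarith
  have hden2 : (0:ℝ) < cu + cw - 1 := by linarith
  have hden3 : (0:ℝ) < cw - 1 := by linarith
  have heq : a + b -
      ((cu + cv) * cw * ((cu + cw) - cw) / ((cu + cw) * ((cu + cw) - 1) * (cw - 1))) *
        (1 / 2 * s2) -
      ((cu + cv) * cw / ((cu + cw) * ((cu + cw) - 1))) * (1 / 2 * (s1 + 2 * a + s2)) =
      (2 * (cu + cw) * (cu + cw - 1) * (cw - 1) * (a + b)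
        - (cu + cv) * cw * (cw - 1) * (s1 + 2 * a + s2)
        - (cu + cv) * cw * cu * s2) / (2 * ((cu + cw) * ((cu + cw) - 1) * (cw - 1))) := by
    field_simp
    ring
  rw [heq]
  apply div_nonneg _ (by positivity)
  nlinarith [mul_nonneg (mul_nonneg (by linarith : (0:ℝ) ≤ cu + cv) hden3.le)
      (by linarith : (0:ℝ) ≤ 2 * (cu - 1) * a - cw * s1),
    mul_nonneg (mul_nonneg (by linarith : (0:ℝ) ≤ cw - cv) hden2.le)
      (by linarith : (0:ℝ) ≤ 2 * (cw - 1) * a - cu * s2),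
    mul_nonneg (mul_nonneg hden1.le hden2.le)
      (by linarith : (0:ℝ) ≤ 2 * (cw - 1) * b - cv * s2)]
end
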